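/- arXiv:math-ph/0304008 — 11 statements merged into one kernel-verified Lean document; each statement's English description precedes it below -/
import Mathlib

section
/- Let Λ ∈ ℂ, let x_1,…,x_n ∈ ℂ be pairwise distinct, let y_1,…,y_m ∈ ℂ be pairwise distinct, and suppose x_i ≠ y_j for all i, j. Set p = ∏_{i=1}^n (X − x_i) and q = ∏_{j=1}^m (X − y_j) in ℂ[X]. Then {p,q}_Λ = 0 (as a polynomial identity) if and only if the following equilibrium conditions hold: for every i, ∑_{k≠i} 1/(x_i − x_k) − Λ·∑_{j=1}^m 1/(x_i − y_j) = 0, and for every j, Λ²·∑_{l≠j} 1/(y_j − y_l) − Λ·∑_{i=1}^n 1/(y_j − x_i) = 0. (These are exactly the critical-point equations for the Coulomb energy E = ∑_{i<j} Q_i Q_j ln|z_i − z_j| of n charges of value 1 at the x_i and m charges of value −Λ at the y_j.) -/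
/-!
Write `E = {p,q}_Λ` (`bilinearBracket Λ p q`). At a root `a = x i` of `p`, writing
`p = (X - a) r`, only the first two terms of `E` survive and `p'(a) = r(a)`, `p''(a) = 2 r'(a)`.
As the roots are simple, `r'(a) / r(a)` and `q'(a) / q(a)` are the sums of `1 / (a - ·)` over the
other roots, so `E(a)` is a nonzero multiple of the equilibrium condition at `x i`; likewise at
the `y j`. Hence the equilibrium conditions say exactly that `E` vanishes at the `n + m` distinct
points `x i`, `y j`. Every term of `E` has degree below `deg p + deg q = n + m`, so this forces
`E = 0`.
-/
open Polynomial Finset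

namespace Polynomial

variable {R K ι κ : Type*}

noncomputable def bilinearBracket [CommRing R] (Λ : R) (p q : R[X]) : R[X] :=
  derivative (derivative p) * q - 2 * C Λ * derivative p * derivative q
    + C Λ ^ 2 * p * derivative (derivative q)

section Degree

variable [CommRing R]

lemma natDegree_derivative_mul_le (f g : R[X]) :
    (derivative f * g).natDegree ≤ f.natDegree + g.natDegree - 1 := by
  rcases eq_or_ne (derivative f) 0 with hf | hf
  · simp [hf]
  · have hpos : f.natDegree ≠ 0 := fun h => hf (derivative_of_natDegree_zero h)
    have := natDegree_derivative_le f
    calc (derivative f * g).natDegree ≤ (derivative f).natDegree + g.natDegree :=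
          natDegree_mul_le
      _ ≤ f.natDegree + g.natDegree - 1 := by omega

lemma natDegree_bilinearBracket_le (Λ : R) (p q : R[X]) :
    (bilinearBracket Λ p q).natDegree ≤ p.natDegree + q.natDegree - 1 := by
  have h₁ := natDegree_derivative_mul_le (derivative p) q
  have h₂ := natDegree_derivative_mul_le p (derivative q)
  have h₃ := natDegree_derivative_mul_le (derivative q) p
  have hp' := natDegree_derivative_le p
  have hq' := natDegree_derivative_le q
  have hbracket : bilinearBracket Λ p q = derivative (derivative p) * q
      - C (2 * Λ) * (derivative p * derivative q)
      + C (Λ ^ 2) * (derivative (derivative q) * p) := by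
    simp only [bilinearBracket, C_mul, C_pow, C_ofNat]; ring
  rw [hbracket]
  refine (natDegree_add_le _ _).trans (max_le ((natDegree_sub_le _ _).trans (max_le ?_ ?_)) ?_)
  · omega
  · exact (natDegree_C_mul_le _ _).trans (by omega)
  · exact (natDegree_C_mul_le _ _).trans (by omega)

end Degree

section Eval

variable [Field K]

lemma eval_bilinearBracket_of_eq_X_sub_C_mul_left {Λ a : K} {p q r : K[X]}
    (hp : p = (X - C a) * r) :
    eval a (bilinearBracket Λ p q) =
      2 * (eval a (derivative r) * eval a q - Λ * eval a r * eval a (derivative q)) := by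
  subst hp
  simp only [bilinearBracket, derivative_mul, derivative_add, derivative_sub, derivative_X,
    derivative_C, derivative_one, eval_add, eval_sub, eval_mul, eval_pow, eval_X, eval_C,
    eval_ofNat, eval_one, eval_zero, sub_self, sub_zero]
  ring

lemma eval_bilinearBracket_of_eq_X_sub_C_mul_right {Λ a : K} {p q r : K[X]}
    (hq : q = (X - C a) * r) :
    eval a (bilinearBracket Λ p q) =
      2 * (Λ ^ 2 * eval a p * eval a (derivative r) - Λ * eval a (derivative p) * eval a r) := by
  subst hq
  simp only [bilinearBracket, derivative_mul, derivative_add, derivative_sub, derivative_X,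
    derivative_C, derivative_one, eval_add, eval_sub, eval_mul, eval_pow, eval_X, eval_C,
    eval_ofNat, eval_one, eval_zero, sub_self, sub_zero]
  ring

lemma eval_prod_X_sub_C_ne_zero {s : Finset ι} {f : ι → K} {a : K} (ha : ∀ i ∈ s, a ≠ f i) :
    eval a (∏ i ∈ s, (X - C (f i))) ≠ 0 := by
  simpa [eval_prod, prod_ne_zero_iff, sub_eq_zero] using ha

lemma eval_derivative_prod_X_sub_C [DecidableEq ι] {s : Finset ι} {f : ι → K} {a : K}
    (ha : ∀ i ∈ s, a ≠ f i) :
    eval a (derivative (∏ i ∈ s, (X - C (f i)))) =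
      eval a (∏ i ∈ s, (X - C (f i))) * ∑ i ∈ s, 1 / (a - f i) := by
  simp only [derivative_prod_finset, derivative_sub, derivative_X, derivative_C, sub_zero,
    mul_one, eval_finsetSum, eval_prod, eval_sub, eval_X, eval_C, mul_sum]
  refine sum_congr rfl fun i hi => ?_
  rw [← mul_prod_erase s _ hi]
  field_simp [sub_ne_zero.mpr (ha i hi)]

variable [NeZero (2 : K)] [Fintype ι] [Fintype κ] [DecidableEq ι] [DecidableEq κ]
  {f : ι → K} {g : κ → K}

lemma eval_bilinearBracket_prod_X_sub_C_eq_zero_iff_left (Λ : K) (hf : Function.Injective f)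
    (hfg : ∀ i j, f i ≠ g j) (i : ι) :
    eval (f i) (bilinearBracket Λ (∏ k, (X - C (f k))) (∏ j, (X - C (g j)))) = 0 ↔
      ∑ k ∈ univ.erase i, 1 / (f i - f k) - Λ * ∑ j, 1 / (f i - g j) = 0 := by
  have hff : ∀ k ∈ univ.erase i, f i ≠ f k := fun k hk => hf.ne (ne_of_mem_erase hk).symm
  have hfg' : ∀ j ∈ (univ : Finset κ), f i ≠ g j := fun j _ => hfg i j
  have hc := mul_ne_zero (mul_ne_zero two_ne_zero (eval_prod_X_sub_C_ne_zero hff))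
    (eval_prod_X_sub_C_ne_zero hfg')
  rw [eval_bilinearBracket_of_eq_X_sub_C_mul_left
      (mul_prod_erase univ (fun k => X - C (f k)) (mem_univ i)).symm,
    eval_derivative_prod_X_sub_C hff, eval_derivative_prod_X_sub_C hfg']
  exact (Eq.congr_left (by ring)).trans (mul_eq_zero_iff_left hc)

lemma eval_bilinearBracket_prod_X_sub_C_eq_zero_iff_right (Λ : K) (hg : Function.Injective g)
    (hfg : ∀ i j, f i ≠ g j) (j : κ) :
    eval (g j) (bilinearBracket Λ (∏ i, (X - C (f i))) (∏ l, (X - C (g l)))) = 0 ↔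
      Λ ^ 2 * ∑ l ∈ univ.erase j, 1 / (g j - g l) - Λ * ∑ i, 1 / (g j - f i) = 0 := by
  have hgg : ∀ l ∈ univ.erase j, g j ≠ g l := fun l hl => hg.ne (ne_of_mem_erase hl).symm
  have hgf : ∀ i ∈ (univ : Finset ι), g j ≠ f i := fun i _ => (hfg i j).symm
  have hc := mul_ne_zero (mul_ne_zero two_ne_zero (eval_prod_X_sub_C_ne_zero hgg))
    (eval_prod_X_sub_C_ne_zero hgf)
  rw [eval_bilinearBracket_of_eq_X_sub_C_mul_right
      (mul_prod_erase univ (fun l => X - C (g l)) (mem_univ j)).symm,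
    eval_derivative_prod_X_sub_C hgg, eval_derivative_prod_X_sub_C hgf]
  exact (Eq.congr_left (by ring)).trans (mul_eq_zero_iff_left hc)

end Eval

end Polynomial

/-- Equilibrium of `n` charges of value `1` at the `x i` and `m` charges of value `-Λ`
at the `y j` is equivalent to the bilinear equation `{p,q}_Λ = 0` for
`p = ∏ (X - x i)`, `q = ∏ (X - y j)`. -/
theorem charges_equilibrium_iff_bilinear
    (Λ : ℂ) (n m : ℕ) (x : Fin n → ℂ) (y : Fin m → ℂ)
    (hx : Function.Injective x) (hy : Function.Injective y)
    (hxy : ∀ i j, x i ≠ y j)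
    (p q : ℂ[X])
    (hp : p = ∏ i, (X - C (x i))) (hq : q = ∏ j, (X - C (y j))) :
    derivative (derivative p) * q - 2 * C Λ * derivative p * derivative q
        + C Λ ^ 2 * p * derivative (derivative q) = 0 ↔
      ((∀ i, (∑ k ∈ Finset.univ.erase i, 1 / (x i - x k))
          - Λ * ∑ j, 1 / (x i - y j) = 0) ∧
       (∀ j, Λ ^ 2 * (∑ l ∈ Finset.univ.erase j, 1 / (y j - y l))
          - Λ * ∑ i, 1 / (y j - x i) = 0)) := by
  subst hp hq
  change bilinearBracket Λ _ _ = 0 ↔ _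
  constructor
  · intro h
    exact ⟨fun i => (eval_bilinearBracket_prod_X_sub_C_eq_zero_iff_left Λ hx hxy i).1
        (by rw [h, eval_zero]),
      fun j => (eval_bilinearBracket_prod_X_sub_C_eq_zero_iff_right Λ hy hxy j).1
        (by rw [h, eval_zero])⟩
  rintro ⟨hxeq, hyeq⟩
  rcases Nat.eq_zero_or_pos (n + m) with hnm | hnm
  · obtain ⟨rfl, rfl⟩ : n = 0 ∧ m = 0 := by omega
    simp [bilinearBracket]
  refine eq_zero_of_natDegree_lt_card_of_eval_eq_zero _ (hx.sumElim hy hxy) ?_ ?_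
  · rintro (i | j)
    · exact (eval_bilinearBracket_prod_X_sub_C_eq_zero_iff_left Λ hx hxy i).2 (hxeq i)
    · exact (eval_bilinearBracket_prod_X_sub_C_eq_zero_iff_right Λ hy hxy j).2 (hyeq j)
  · have hdeg := natDegree_bilinearBracket_le Λ (∏ i, (X - C (x i))) (∏ j, (X - C (y j)))
    simp only [natDegree_finsetProd_X_sub_C_eq_card, card_univ, Fintype.card_fin] at hdeg
    rw [Fintype.card_sum, Fintype.card_fin, Fintype.card_fin]
    omega
end

section
/- Let p, q ∈ ℂ[X] be nonzero polynomials that are squarefree and coprime (no repeated and no common roots). Then the following are equivalent: (i) both (p/q)² and (q/p)² admit rational antiderivatives, i.e. there exist a, b ∈ ℂ[X] with b ≠ 0 and (a'·b − a·b')·q² = p²·b², and there exist c, d ∈ ℂ[X] with d ≠ 0 and (c'·d − c·d')·p² = q²·d²; (ii) p''·q − 2·p'·q' + p·q'' = 0. (Burchnall–Chaundy: rationality of ∫(p/q)²dz and ∫(q/p)²dz is equivalent to {p,q}_1 = 0.) -/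
/-!
Since `s` is separable, every `g` can be written as `g = W(s, a₀) + s r`, that is
`g / s² = (a₀ / s)' + r / s`. The derivative of a rational function never has a simple pole
(a pole of order `m` of `a / b` becomes one of order `m + 1`), so `g / s²` has a rational
antiderivative iff `s ∣ r`, i.e. iff `s ∣ W(s', g)`: all residues of `g / s²` vanish.
For `g = p²` and `s = q` this condition reads `q ∣ {p,q}₁`, and symmetrically `p ∣ {p,q}₁`;
as `{p,q}₁` has degree less than `p q`, both hold iff `{p,q}₁ = 0`.
-/

open Polynomial

namespace Polynomial

section CommRing

variable {R : Type*} [CommRing R]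

theorem wronskian_mul_mul (d a b : R[X]) :
    wronskian (d * a) (d * b) = d ^ 2 * wronskian a b := by
  simp only [wronskian, derivative_mul]; ring

theorem wronskian_mul_sub_mul (a b c s : R[X]) :
    wronskian (b * s) (a * s - c * b) = s ^ 2 * wronskian b a - b ^ 2 * wronskian s c := by
  simp only [wronskian, derivative_mul, derivative_sub]; ring

theorem wronskian_derivative_wronskian_add_mul (s a r : R[X]) :
    wronskian (derivative s) (wronskian s a + s * r) =
      s * (wronskian (derivative s) (derivative a) + wronskian (derivative s) r) +
        derivative s ^ 2 * r := by
  simp only [wronskian, derivative_mul, derivative_add, derivative_sub]; ring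

theorem Separable.exists_eq_wronskian_add_mul {s : R[X]} (hs : s.Separable) (g : R[X]) :
    ∃ a r, g = wronskian s a + s * r := by
  obtain ⟨u, v, huv⟩ := hs
  refine ⟨-(v * g), u * g + derivative (v * g), ?_⟩
  simp only [wronskian, derivative_neg]
  linear_combination -g * huv

theorem Separable.dvd_wronskian_derivative_wronskian_add_mul_iff {s : R[X]} (hs : s.Separable)
    (a r : R[X]) : s ∣ wronskian (derivative s) (wronskian s a + s * r) ↔ s ∣ r := by
  rw [wronskian_derivative_wronskian_add_mul, dvd_add_right (dvd_mul_right _ _)]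
  exact ⟨hs.pow_right.dvd_of_dvd_mul_left, (Dvd.dvd.mul_left · _)⟩

end CommRing

variable {K : Type*} [Field K]

theorem derivative_surjective [CharZero K] : Function.Surjective (derivative : K[X] → K[X]) := by
  intro f
  induction f using Polynomial.induction_on' with
  | add f g hf hg =>
    obtain ⟨F, rfl⟩ := hf
    obtain ⟨G, rfl⟩ := hg
    exact ⟨F + G, derivative_add⟩
  | monomial n c =>
    refine ⟨monomial (n + 1) (c / (n + 1)), ?_⟩
    rw [derivative_monomial, Nat.add_sub_cancel]
    congr 1
    push_cast
    field_simp

theorem not_pow_rootMultiplicity_dvd_wronskian [CharZero K] {a b : K[X]} {β : K}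
    (hab : IsCoprime a b) (hb : b ≠ 0) (hβ : b.IsRoot β) :
    ¬ (X - C β) ^ b.rootMultiplicity β ∣ wronskian b a := by
  intro h
  set m := b.rootMultiplicity β
  have hb' : derivative b ≠ 0 := fun h0 ↦ by
    rw [eq_C_of_derivative_eq_zero h0, IsRoot, eval_C] at hβ
    exact hb (by rw [eq_C_of_derivative_eq_zero h0, hβ, C_0])
  have hcop : IsCoprime ((X - C β) ^ m) a :=
    (hab.of_isCoprime_of_dvd_right (dvd_iff_isRoot.2 hβ)).symm.pow_left
  have hdvd : (X - C β) ^ m ∣ derivative b :=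
    hcop.dvd_of_dvd_mul_right <| by
      have := dvd_sub ((pow_rootMultiplicity_dvd b β).mul_right (derivative a)) h
      rwa [wronskian, sub_sub_cancel] at this
  have hm : 0 < m := (rootMultiplicity_pos hb).2 hβ
  have := (le_rootMultiplicity_iff hb').2 hdvd
  rw [derivative_rootMultiplicity_of_root hβ] at this
  omega

theorem Squarefree.dvd_of_forall_isRoot [IsAlgClosed K] {s r : K[X]} (hs : Squarefree s)
    (h : ∀ β, s.IsRoot β → r.IsRoot β) : s ∣ r := by
  rcases eq_or_ne r 0 with rfl | hr
  · exact dvd_zero s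
  rw [IsAlgClosed.dvd_iff_roots_le_roots hs.ne_zero hr,
    Multiset.le_iff_subset (nodup_roots (PerfectField.separable_iff_squarefree.2 hs))]
  intro β hβ
  exact (mem_roots hr).2 (h β (isRoot_of_mem_roots hβ))

theorem IsCoprime.dvd_of_wronskian_mul_eq [IsAlgClosed K] [CharZero K] {a b s r : K[X]}
    (hab : IsCoprime a b) (hb : b ≠ 0) (hs : Squarefree s)
    (h : wronskian b a * s = r * b ^ 2) : s ∣ r := by
  refine hs.dvd_of_forall_isRoot fun β hsβ ↦ ?_
  by_cases hbβ : b.IsRoot β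
  · refine absurd ?_ (not_pow_rootMultiplicity_dvd_wronskian hab hb hbβ)
    set m := b.rootMultiplicity β
    have hm : 0 < m := (rootMultiplicity_pos hb).2 hbβ
    refine Squarefree.pow_dvd_of_squarefree_of_pow_succ_dvd_mul_left hs (prime_X_sub_C β) ?_
    rw [h]
    refine Dvd.dvd.mul_left ((pow_dvd_pow _ (by omega : m + 1 ≤ m * 2)).trans ?_) r
    rw [pow_mul]
    exact pow_dvd_pow_of_dvd (pow_rootMultiplicity_dvd b β) 2
  · have : X - C β ∣ r * b ^ 2 := h ▸ (dvd_iff_isRoot.2 hsβ).mul_left _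
    refine dvd_iff_isRoot.1 (((prime_X_sub_C β).dvd_or_dvd this).resolve_right fun hdvd ↦ ?_)
    exact hbβ (dvd_iff_isRoot.1 ((prime_X_sub_C β).dvd_of_dvd_pow hdvd))

theorem dvd_of_wronskian_mul_eq [IsAlgClosed K] [CharZero K] {a b s r : K[X]}
    (hb : b ≠ 0) (hs : Squarefree s) (h : wronskian b a * s = r * b ^ 2) : s ∣ r := by
  classical
  obtain ⟨a', b', ha, hb', hunit⟩ := extract_gcd a b
  generalize gcd a b = d at ha hb'
  subst ha hb'
  have hd : d ≠ 0 := left_ne_zero_of_mul hb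
  rw [wronskian_mul_mul] at h
  refine ((gcd_isUnit_iff a' b').1 hunit).dvd_of_wronskian_mul_eq
    (right_ne_zero_of_mul hb) hs (mul_left_cancel₀ (pow_ne_zero 2 hd) ?_)
  linear_combination h

theorem exists_rational_antiderivative_iff [IsAlgClosed K] [CharZero K] {s g : K[X]}
    (hs : Squarefree s) :
    (∃ a b : K[X], b ≠ 0 ∧ (derivative a * b - a * derivative b) * s ^ 2 = g * b ^ 2) ↔
      s ∣ wronskian (derivative s) g := by
  have hsep : s.Separable := PerfectField.separable_iff_squarefree.2 hs
  obtain ⟨a₀, r, rfl⟩ := hsep.exists_eq_wronskian_add_mul g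
  rw [hsep.dvd_wronskian_derivative_wronskian_add_mul_iff]
  constructor
  · rintro ⟨a, b, hb, h⟩
    refine dvd_of_wronskian_mul_eq (a := a * s - a₀ * b) (mul_ne_zero hb hs.ne_zero) hs ?_
    rw [wronskian_mul_sub_mul]
    simp only [wronskian] at h ⊢
    linear_combination s * h
  · rintro ⟨c, rfl⟩
    obtain ⟨F, rfl⟩ := derivative_surjective c
    refine ⟨a₀ + s * F, s, hs.ne_zero, ?_⟩
    simp only [wronskian, derivative_add, derivative_mul]
    ring

section Bracket

variable {R : Type*} [CommRing R]

/-- `{p,q}₁`. -/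
noncomputable def bracket (p q : R[X]) : R[X] :=
  derivative (derivative p) * q - 2 * derivative p * derivative q + p * derivative (derivative q)

theorem bracket_comm (p q : R[X]) : bracket p q = bracket q p := by
  unfold bracket; ring

theorem wronskian_derivative_sq (p q : R[X]) :
    wronskian (derivative q) (p ^ 2) = q * (p * derivative (derivative p)) - p * bracket p q := by
  simp only [wronskian, bracket, derivative_sq, map_ofNat]; ring

theorem IsCoprime.dvd_wronskian_derivative_sq_iff {p q : R[X]} (h : IsCoprime p q) :
    q ∣ wronskian (derivative q) (p ^ 2) ↔ q ∣ bracket p q := by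
  rw [wronskian_derivative_sq, dvd_sub_right (dvd_mul_right _ _)]
  exact ⟨h.symm.dvd_of_dvd_mul_left, (Dvd.dvd.mul_left · p)⟩

theorem degree_mul_lt_degree_mul [NoZeroDivisors R] {f g p q : R[X]} (hq : q ≠ 0)
    (hf : f.degree < p.degree) (hg : g.degree ≤ q.degree) : (f * g).degree < (p * q).degree := by
  calc (f * g).degree ≤ f.degree + g.degree := degree_mul_le f g
    _ ≤ f.degree + q.degree := add_le_add_right hg _
    _ < p.degree + q.degree := (WithBot.add_lt_add_iff_right (degree_ne_bot.2 hq)).2 hf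
    _ = (p * q).degree := degree_mul.symm

theorem degree_bracket_lt [NoZeroDivisors R] {p q : R[X]} (hp : p ≠ 0) (hq : q ≠ 0) :
    (bracket p q).degree < (p * q).degree := by
  have hp' : (derivative p).degree < p.degree := degree_derivative_lt hp
  have hp'' : (derivative (derivative p)).degree < p.degree := degree_derivative_le.trans_lt hp'
  have hq'' : (derivative (derivative q)).degree < q.degree :=
    degree_derivative_le.trans_lt (degree_derivative_lt hq)
  have h2p' : (2 * derivative p).degree < p.degree := by
    rw [two_mul]; exact (degree_add_le _ _).trans_lt (max_lt hp' hp')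
  refine (degree_add_le _ _).trans_lt (max_lt ((degree_sub_le _ _).trans_lt (max_lt ?_ ?_)) ?_)
  · exact degree_mul_lt_degree_mul hq hp'' le_rfl
  · exact degree_mul_lt_degree_mul hq h2p' degree_derivative_le
  · rw [mul_comm p, mul_comm p]
    exact degree_mul_lt_degree_mul hp hq'' le_rfl

end Bracket

end Polynomial

/-- Burchnall–Chaundy: for squarefree coprime `p, q`, rationality of the
antiderivatives of `(p/q)²` and `(q/p)²` is equivalent to `{p,q}_1 = 0`. -/
theorem rational_integrals_iff_bilinear_one
    (p q : ℂ[X]) (hp : p ≠ 0) (hq : q ≠ 0)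
    (hsp : Squarefree p) (hsq : Squarefree q) (hpq : IsCoprime p q) :
    ((∃ a b : ℂ[X], b ≠ 0 ∧ (derivative a * b - a * derivative b) * q ^ 2 = p ^ 2 * b ^ 2) ∧
     (∃ c d : ℂ[X], d ≠ 0 ∧ (derivative c * d - c * derivative d) * p ^ 2 = q ^ 2 * d ^ 2)) ↔
    derivative (derivative p) * q - 2 * derivative p * derivative q
        + p * derivative (derivative q) = 0 := by
  change _ ↔ bracket p q = 0
  rw [exists_rational_antiderivative_iff hsq, exists_rational_antiderivative_iff hsp,
    hpq.dvd_wronskian_derivative_sq_iff, hpq.symm.dvd_wronskian_derivative_sq_iff, bracket_comm q p]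
  refine ⟨fun ⟨hqD, hpD⟩ ↦ ?_, fun h ↦ by simp [h]⟩
  exact eq_zero_of_dvd_of_degree_lt (hpq.mul_dvd hpD hqD) (degree_bracket_lt hp hq)
end

section
/- Let Λ ∈ ℂ and let p, q ∈ ℂ[X] be nonzero coprime polynomials. If p divides p''·q − 2Λ·p'·q' and q divides Λ²·p·q'' − 2Λ·p'·q', then p''·q − 2Λ·p'·q' + Λ²·p·q'' = 0. (The key degree argument: writing the combination as N·p·q forces N = 0, since the left-hand side has degree at most deg p + deg q − 2.) -/
open Polynomial

lemma aux_deriv_ne {f : ℂ[X]} (h : derivative f ≠ 0) : 1 ≤ f.natDegree := by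
  by_contra hc
  push_neg at hc
  interval_cases hn : f.natDegree
  · obtain ⟨a, rfl⟩ := Polynomial.natDegree_eq_zero.mp hn
    simp at h

lemma aux_dd_ne {f : ℂ[X]} (h : derivative (derivative f) ≠ 0) : 2 ≤ f.natDegree := by
  have h1 : 1 ≤ (derivative f).natDegree := aux_deriv_ne h
  have h2 : (derivative f).natDegree ≤ f.natDegree - 1 := natDegree_derivative_le f
  omega

/-- Degree argument: if `p ∣ p''q − 2Λp'q'` and `q ∣ Λ²pq'' − 2Λp'q'` for coprime
nonzero `p, q`, then `{p,q}_Λ = 0`. -/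
theorem bilinear_of_dvd
    (Λ : ℂ) (p q : ℂ[X]) (hp : p ≠ 0) (hq : q ≠ 0) (hpq : IsCoprime p q)
    (h1 : p ∣ (derivative (derivative p) * q - 2 * C Λ * derivative p * derivative q))
    (h2 : q ∣ (C Λ ^ 2 * p * derivative (derivative q)
          - 2 * C Λ * derivative p * derivative q)) :
    derivative (derivative p) * q - 2 * C Λ * derivative p * derivative q
        + C Λ ^ 2 * p * derivative (derivative q) = 0 := by
  set E := derivative (derivative p) * q - 2 * C Λ * derivative p * derivative q
        + C Λ ^ 2 * p * derivative (derivative q) with hEdef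
  have hpE : p ∣ E := by
    refine dvd_add h1 ⟨C Λ ^ 2 * derivative (derivative q), by ring⟩
  have hqE : q ∣ E := by
    have hrw : E = derivative (derivative p) * q
        + (C Λ ^ 2 * p * derivative (derivative q)
          - 2 * C Λ * derivative p * derivative q) := by rw [hEdef]; ring
    rw [hrw]
    exact dvd_add ⟨derivative (derivative p), by ring⟩ h2
  have hdvd : p * q ∣ E := hpq.mul_dvd hpE hqE
  by_contra hE
  have hle := Polynomial.natDegree_le_of_dvd hdvd hE
  rw [natDegree_mul hp hq] at hle
  -- bound each term
  set n := p.natDegree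
  set m := q.natDegree
  have hsum : 1 ≤ n + m := by
    by_contra hc
    push_neg at hc
    have hn0 : n = 0 := by omega
    have hm0 : m = 0 := by omega
    obtain ⟨a, rfl⟩ := Polynomial.natDegree_eq_zero.mp hn0
    obtain ⟨b, rfl⟩ := Polynomial.natDegree_eq_zero.mp hm0
    simp [hEdef] at hE
  have hb1 : (derivative (derivative p) * q).natDegree < n + m := by
    by_cases h : derivative (derivative p) = 0
    · simp [h]; omega
    · have h2le : 2 ≤ n := aux_dd_ne h
      have := natDegree_mul_le (p := derivative (derivative p)) (q := q)
      have hdd : (derivative (derivative p)).natDegree ≤ n - 2 := by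
        have a1 := natDegree_derivative_le (derivative p)
        have a2 := natDegree_derivative_le p
        omega
      omega
  have hb2 : (2 * C Λ * derivative p * derivative q).natDegree < n + m := by
    by_cases h : derivative p = 0
    · simp [h]; omega
    by_cases h' : derivative q = 0
    · simp only [h', mul_zero, natDegree_zero]; omega
    have hn1 : 1 ≤ n := aux_deriv_ne h
    have hm1 : 1 ≤ m := aux_deriv_ne h'
    have hc : (2 * C Λ : ℂ[X]).natDegree = 0 := by
      have h : (2 * C Λ : ℂ[X]).natDegree ≤ 0 + 0 := by
        refine natDegree_mul_le.trans ?_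
        gcongr <;> simp
      simpa using h
    have t1 := natDegree_mul_le (p := 2 * C Λ * derivative p) (q := derivative q)
    have t2 := natDegree_mul_le (p := (2 * C Λ : ℂ[X])) (q := derivative p)
    have a1 := natDegree_derivative_le p
    have a2 := natDegree_derivative_le q
    omega
  have hb3 : (C Λ ^ 2 * p * derivative (derivative q)).natDegree < n + m := by
    by_cases h : derivative (derivative q) = 0
    · simp [h]; omega
    · have h2le : 2 ≤ m := aux_dd_ne h
      have hc : ((C Λ : ℂ[X]) ^ 2).natDegree = 0 := by
        simp [natDegree_pow]
      have t1 := natDegree_mul_le (p := C Λ ^ 2 * p) (q := derivative (derivative q))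
      have t2 := natDegree_mul_le (p := (C Λ : ℂ[X]) ^ 2) (q := p)
      have hdd : (derivative (derivative q)).natDegree ≤ m - 2 := by
        have a1 := natDegree_derivative_le (derivative q)
        have a2 := natDegree_derivative_le q
        omega
      omega
  have hEle : E.natDegree < n + m := by
    have s1 := natDegree_sub_le (derivative (derivative p) * q)
      (2 * C Λ * derivative p * derivative q)
    have s2 := natDegree_add_le
      (derivative (derivative p) * q - 2 * C Λ * derivative p * derivative q)
      (C Λ ^ 2 * p * derivative (derivative q))
    rw [hEdef]
    omega
  omega
end

section
/- Let p, q ∈ ℂ[X] be nonzero polynomials that are squarefree and coprime, and let Λ ∈ ℂ. Then {p,q}_Λ = 0 if and only if: for every root x of p one has p''(x)·q(x) − 2Λ·p'(x)·q'(x) = 0, and for every root y of q one has Λ²·p(y)·q''(y) − 2Λ·p'(y)·q'(y) = 0. (This is the vanishing-residue characterization: the conditions say that q^{2Λ}/p² and p^{2/Λ}/q² have no simple poles.) -/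
/-!
Every term of `{p,q}_Λ` loses at least one derivative, so `deg {p,q}_Λ < deg (pq)`. At a root of
`p` (resp. `q`) the bracket evaluates to the left-hand side of the corresponding residue
condition. Since `pq` is squarefree over `ℂ` it has `deg (pq)` distinct roots, and a polynomial
of smaller degree vanishing at all of them is zero.
-/

open Polynomial

namespace Polynomial

variable {R : Type*}

section CommRing

variable [CommRing R]

noncomputable def lambdaBracket (Λ : R) (p q : R[X]) : R[X] :=
  derivative (derivative p) * q - 2 * C Λ * derivative p * derivative q
    + C Λ ^ 2 * p * derivative (derivative q)

theorem eval_lambdaBracket_of_isRoot_left (Λ : R) {p : R[X]} (q : R[X]) {x : R}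
    (hx : p.IsRoot x) :
    (lambdaBracket Λ p q).eval x =
      (derivative (derivative p)).eval x * q.eval x
        - 2 * Λ * (derivative p).eval x * (derivative q).eval x := by
  simp [lambdaBracket, hx.eq_zero]

theorem eval_lambdaBracket_of_isRoot_right (Λ : R) (p : R[X]) {q : R[X]} {y : R}
    (hy : q.IsRoot y) :
    (lambdaBracket Λ p q).eval y =
      Λ ^ 2 * p.eval y * (derivative (derivative q)).eval y
        - 2 * Λ * (derivative p).eval y * (derivative q).eval y := by
  simp only [lambdaBracket, eval_add, eval_sub, eval_mul, hy.eq_zero, mul_zero, eval_ofNat, eval_C,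
    zero_sub, eval_pow]
  ring

end CommRing

theorem degree_mul_lt_degree_mul_s4 [Semiring R] [NoZeroDivisors R] {a b p q : R[X]}
    (ha : a.degree < p.degree) (hb : b.degree ≤ q.degree) (hq : q ≠ 0) :
    (a * b).degree < (p * q).degree := by
  rcases eq_or_ne b 0 with rfl | hb0
  · simpa [bot_lt_iff_ne_bot] using mul_ne_zero (ne_zero_of_degree_gt ha) hq
  · rw [degree_mul, degree_mul]
    exact WithBot.add_lt_add_of_lt_of_le (degree_ne_bot.mpr hb0) ha hb

theorem degree_lambdaBracket_lt [CommRing R] [IsDomain R] (Λ : R) {p q : R[X]}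
    (hp : p ≠ 0) (hq : q ≠ 0) : (lambdaBracket Λ p q).degree < (p * q).degree := by
  have hp'' := degree_derivative_le.trans_lt (degree_derivative_lt hp)
  have hq'' := degree_derivative_le.trans_lt (degree_derivative_lt hq)
  have hmid :
      2 * C Λ * derivative p * derivative q = (2 * Λ) • (derivative p * derivative q) := by
    rw [smul_eq_C_mul, C_mul, C_ofNat]; ring
  have hlast :
      C Λ ^ 2 * p * derivative (derivative q) = Λ ^ 2 • (derivative (derivative q) * p) := by
    rw [smul_eq_C_mul, C_pow]; ring
  refine (degree_add_le _ _).trans_lt (max_lt ((degree_sub_le _ _).trans_lt (max_lt ?_ ?_)) ?_)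
  · exact degree_mul_lt_degree_mul_s4 hp'' le_rfl hq
  · rw [hmid]
    exact (degree_smul_le _ _).trans_lt
      (degree_mul_lt_degree_mul_s4 (degree_derivative_lt hp) degree_derivative_le hq)
  · rw [hlast, mul_comm p]
    exact (degree_smul_le _ _).trans_lt (degree_mul_lt_degree_mul_s4 hq'' le_rfl hp)

theorem eq_zero_of_degree_lt_of_forall_isRoot {K : Type*} [Field K] [IsAlgClosed K]
    {f g : K[X]} (hg : Squarefree g) (hdeg : f.degree < g.degree)
    (hroot : ∀ x, g.IsRoot x → f.IsRoot x) : f = 0 := by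
  classical
  by_contra hf
  refine hf (eq_zero_of_natDegree_lt_card_of_eval_eq_zero' f g.roots.toFinset
    (fun x hx => hroot x ((mem_roots hg.ne_zero).mp (Multiset.mem_toFinset.mp hx))) ?_)
  rw [Multiset.toFinset_card_of_nodup (nodup_roots (PerfectField.separable_iff_squarefree.mpr hg)),
    IsAlgClosed.card_roots_eq_natDegree]
  exact natDegree_lt_natDegree hf hdeg

end Polynomial

theorem bilinear_iff_residues_vanish_general
    (Λ : ℂ) (p q : ℂ[X])
    (hsp : Squarefree p) (hsq : Squarefree q) (hpq : IsCoprime p q) :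
    derivative (derivative p) * q - 2 * C Λ * derivative p * derivative q
        + C Λ ^ 2 * p * derivative (derivative q) = 0 ↔
      ((∀ x : ℂ, p.IsRoot x →
          (derivative (derivative p)).eval x * q.eval x
            - 2 * Λ * (derivative p).eval x * (derivative q).eval x = 0) ∧
       (∀ y : ℂ, q.IsRoot y →
          Λ ^ 2 * p.eval y * (derivative (derivative q)).eval y
            - 2 * Λ * (derivative p).eval y * (derivative q).eval y = 0)) := by
  change lambdaBracket Λ p q = 0 ↔ _
  constructor
  · intro h
    refine ⟨fun x hx => ?_, fun y hy => ?_⟩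
    · rw [← eval_lambdaBracket_of_isRoot_left Λ q hx, h, eval_zero]
    · rw [← eval_lambdaBracket_of_isRoot_right Λ p hy, h, eval_zero]
  · rintro ⟨hroots_p, hroots_q⟩
    refine eq_zero_of_degree_lt_of_forall_isRoot
      (squarefree_mul_iff.mpr ⟨hpq.isRelPrime, hsp, hsq⟩)
      (degree_lambdaBracket_lt Λ hsp.ne_zero hsq.ne_zero) fun x hx => ?_
    rcases root_mul.mp hx with hx | hx
    · exact (eval_lambdaBracket_of_isRoot_left Λ q hx).trans (hroots_p x hx)
    · exact (eval_lambdaBracket_of_isRoot_right Λ p hx).trans (hroots_q x hx)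

/-- Vanishing-residue characterization: for squarefree coprime nonzero `p, q`,
`{p,q}_Λ = 0` iff the residue conditions hold at every root of `p` and of `q`. -/
theorem bilinear_iff_residues_vanish
    (Λ : ℂ) (p q : ℂ[X]) (hp : p ≠ 0) (hq : q ≠ 0)
    (hsp : Squarefree p) (hsq : Squarefree q) (hpq : IsCoprime p q) :
    derivative (derivative p) * q - 2 * C Λ * derivative p * derivative q
        + C Λ ^ 2 * p * derivative (derivative q) = 0 ↔
      ((∀ x : ℂ, p.IsRoot x →
          (derivative (derivative p)).eval x * q.eval x
            - 2 * Λ * (derivative p).eval x * (derivative q).eval x = 0) ∧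
       (∀ y : ℂ, q.IsRoot y →
          Λ ^ 2 * p.eval y * (derivative (derivative q)).eval y
            - 2 * Λ * (derivative p).eval y * (derivative q).eval y = 0)) :=
  bilinear_iff_residues_vanish_general Λ p q hsp hsq hpq
end

section
/- Let n, m be nonnegative integers. Then (n − 2m)² = n + 4m if and only if there exists i ∈ ℤ such that n = i(3i+2) and either 2m = i(3i−1) or 2m = (i+1)(3i+2). (That is, the solutions of the Diophantine equation for the degrees in the Λ = 2 problem are exactly the pairs (n_i, m_i) and (n_i, m_{i+1}) with n_i = i(3i+2) and m_i = i(3i−1)/2, i ∈ ℤ.) -/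
/-- Complete solution of the Diophantine equation `(n − 2m)² = n + 4m`. -/
theorem diophantine_lambda_two (n m : ℕ) :
    ((n : ℤ) - 2 * m) ^ 2 = n + 4 * m ↔
      ∃ i : ℤ, (n : ℤ) = i * (3 * i + 2) ∧
        (2 * (m : ℤ) = i * (3 * i - 1) ∨ 2 * (m : ℤ) = (i + 1) * (3 * i + 2)) := by
  constructor
  · intro h
    set k : ℤ := (n : ℤ) - 2 * m with hk
    have hkey : k * k = k + 6 * m := by nlinarith [h]
    have h3 : k % 3 = 0 ∨ k % 3 = 1 ∨ k % 3 = 2 := by omega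
    rcases h3 with h3 | h3 | h3
    · obtain ⟨i, hi⟩ : ∃ i : ℤ, k = 3 * i := ⟨k / 3, by omega⟩
      refine ⟨i, ?_, Or.inl ?_⟩
      · nlinarith [hkey, hi]
      · nlinarith [hkey, hi]
    · obtain ⟨j, hj⟩ : ∃ j : ℤ, k = 3 * j + 1 := ⟨k / 3, by omega⟩
      refine ⟨-j - 1, ?_, Or.inr ?_⟩
      · nlinarith [hkey, hj]
      · nlinarith [hkey, hj]
    · obtain ⟨t, ht⟩ : ∃ t : ℤ, k = 3 * t + 2 := ⟨k / 3, by omega⟩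
      exfalso
      have : 6 * (m : ℤ) = 9 * (t * t) + 9 * t + 2 := by nlinarith [hkey, ht]
      omega
  · rintro ⟨i, hn, h2m | h2m⟩
    · linear_combination ((n : ℤ) - 2 * m + 3 * i - 1) * hn +
        (-(n : ℤ) + 2 * m - 3 * i - 2) * h2m
    · linear_combination ((n : ℤ) - 2 * m - 3 * i - 3) * hn +
        (-(n : ℤ) + 2 * m + 3 * i) * h2m
end

section
/- Let p ∈ ℂ[X] be a nonzero squarefree polynomial and let q₁, q₂ ∈ ℂ[X] satisfy p''·q₁ − 4·p'·q₁' + 4·p·q₁'' = 0 and p''·q₂ − 4·p'·q₂' + 4·p·q₂'' = 0. Then there exists a constant c ∈ ℂ such that q₁'·q₂ − q₁·q₂' = c·p. (Any two polynomial solutions q of {p,q}_2 = 0 for fixed p have Wronskian proportional to p; this yields the first-order recursion q_{i+1}'q_i − q_{i+1}q_i' = (3i+1)p_i.) -/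
open Polynomial

/-- Any two polynomial solutions `q` of `{p,q}_2 = 0` for fixed squarefree `p`
have Wronskian proportional to `p`. -/
theorem wronskian_eq_const_mul_p
    (p q₁ q₂ : ℂ[X]) (hp : p ≠ 0) (hsp : Squarefree p)
    (h1 : derivative (derivative p) * q₁ - 4 * derivative p * derivative q₁
        + 4 * p * derivative (derivative q₁) = 0)
    (h2 : derivative (derivative p) * q₂ - 4 * derivative p * derivative q₂
        + 4 * p * derivative (derivative q₂) = 0) :
    ∃ c : ℂ, derivative q₁ * q₂ - q₁ * derivative q₂ = C c * p := by
  set W : ℂ[X] := derivative q₁ * q₂ - q₁ * derivative q₂ with hWdef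
  have key : p * derivative W = derivative p * W := by
    have h4 : (4 : ℂ[X]) * (p * derivative W) = 4 * (derivative p * W) := by
      simp only [hWdef, derivative_sub, derivative_mul]
      linear_combination q₂ * h1 - q₁ * h2
    have := mul_left_cancel₀ (show (4 : ℂ[X]) ≠ 0 by norm_num) h4
    exact this
  have hsep : p.Separable := (PerfectField.separable_iff_squarefree).mpr hsp
  have hdvd : p ∣ W := by
    have : p ∣ derivative p * W := ⟨derivative W, key.symm⟩
    exact hsep.dvd_of_dvd_mul_left this
  obtain ⟨s, hs⟩ := hdvd
  have hs' : derivative s = 0 := by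
    have h0 : p * p * derivative s = 0 := by
      have := key
      rw [hs, derivative_mul] at this
      ring_nf at this ⊢
      linear_combination this
    rcases mul_eq_zero.mp h0 with h | h
    · exact absurd (mul_self_eq_zero.mp h) hp
    · exact h
  obtain ⟨c, hc⟩ := Polynomial.natDegree_eq_zero.mp
    (natDegree_eq_zero_of_derivative_eq_zero hs')
  exact ⟨c, by rw [show (W : ℂ[X]) = C c * p from by rw [hs, ← hc]; ring]⟩
end

section
/- Let q ∈ ℂ[X] be a nonzero squarefree polynomial and let p₁, p₂ ∈ ℂ[X] satisfy p₁''·q − 4·p₁'·q' + 4·p₁·q'' = 0 and p₂''·q − 4·p₂'·q' + 4·p₂·q'' = 0. Then there exists a constant c ∈ ℂ such that p₁'·p₂ − p₁·p₂' = c·q⁴. (Any two polynomial solutions p of {p,q}_2 = 0 for fixed q have Wronskian proportional to q⁴; this yields the first-order recursion p_i'p_{i−1} − p_ip_{i−1}' = (6i−1)q_i⁴.) -/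
open Polynomial

private lemma step_lemma (q W : ℂ[X]) (hq : q ≠ 0)
    (hco : IsCoprime q (derivative q)) (n : ℂ) (hn : n ≠ 0)
    (h : derivative W * q = C n * derivative q * W) :
    ∃ V, W = q * V ∧ derivative V * q = C (n - 1) * derivative q * V := by
  have h1 : q ∣ C n * (derivative q * W) := ⟨derivative W, by linear_combination -h⟩
  have hu : IsUnit (C n) := (isUnit_C).mpr hn.isUnit
  have h2 : q ∣ derivative q * W := hu.dvd_mul_left.mp h1
  have h3 : q ∣ W := hco.dvd_of_dvd_mul_left h2
  obtain ⟨V, rfl⟩ := h3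
  refine ⟨V, rfl, ?_⟩
  have hd : derivative (q * V) = derivative q * V + q * derivative V := derivative_mul
  have key : q * (derivative V * q) = q * (C (n - 1) * derivative q * V) := by
    have hC : (C (n - 1) : ℂ[X]) = C n - 1 := by simp [C_sub]
    rw [hC]
    linear_combination h - q * hd
  exact mul_left_cancel₀ hq key

/-- Any two polynomial solutions `p` of `{p,q}_2 = 0` for fixed squarefree `q`
have Wronskian proportional to `q⁴`. -/
theorem wronskian_eq_const_mul_q_pow_four
    (q p₁ p₂ : ℂ[X]) (hq : q ≠ 0) (hsq : Squarefree q)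
    (h1 : derivative (derivative p₁) * q - 4 * derivative p₁ * derivative q
        + 4 * p₁ * derivative (derivative q) = 0)
    (h2 : derivative (derivative p₂) * q - 4 * derivative p₂ * derivative q
        + 4 * p₂ * derivative (derivative q) = 0) :
    ∃ c : ℂ, derivative p₁ * p₂ - p₁ * derivative p₂ = C c * q ^ 4 := by
  have hco : IsCoprime q (derivative q) :=
    (PerfectField.separable_iff_squarefree.mpr hsq)
  set W := derivative p₁ * p₂ - p₁ * derivative p₂ with hWdef
  have hC4 : (C (4:ℂ) : ℂ[X]) = 4 := map_ofNat C 4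
  have hW : derivative W * q = C (4:ℂ) * derivative q * W := by
    rw [hWdef, hC4]
    simp only [derivative_sub, derivative_mul]
    linear_combination p₂ * h1 - p₁ * h2
  obtain ⟨V₁, hV₁, hW1⟩ := step_lemma q W hq hco 4 (by norm_num) hW
  rw [show (4:ℂ) - 1 = 3 from by norm_num] at hW1
  obtain ⟨V₂, hV₂, hW2⟩ := step_lemma q V₁ hq hco 3 (by norm_num) hW1
  rw [show (3:ℂ) - 1 = 2 from by norm_num] at hW2
  obtain ⟨V₃, hV₃, hW3⟩ := step_lemma q V₂ hq hco 2 (by norm_num) hW2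
  rw [show (2:ℂ) - 1 = 1 from by norm_num] at hW3
  obtain ⟨V₄, hV₄, hW4⟩ := step_lemma q V₃ hq hco 1 (by norm_num) hW3
  rw [show (1:ℂ) - 1 = 0 from by norm_num, map_zero, zero_mul, zero_mul] at hW4
  have hd0 : derivative V₄ = 0 := by
    rcases mul_eq_zero.mp hW4 with h | h
    · exact h
    · exact absurd h hq
  refine ⟨V₄.coeff 0, ?_⟩
  rw [hWdef.symm] at *
  rw [hV₁, hV₂, hV₃, hV₄, ← eq_C_of_derivative_eq_zero hd0]
  ring
end

section
/- Let p ∈ ℂ[X] be a nonzero squarefree polynomial and let q₁, q₂ ∈ ℂ[X] satisfy p''·q₁ − 2·p'·q₁' + p·q₁'' = 0 and p''·q₂ − 2·p'·q₂' + p·q₂'' = 0. Then there exists a constant c ∈ ℂ such that q₁'·q₂ − q₁·q₂' = c·p². (In the Adler–Moser case Λ = 1, any two polynomial solutions q of {p,q}_1 = 0 for fixed p have Wronskian proportional to p²; this underlies the three-term relation θ'_{n+1}θ_{n−1} − θ_{n+1}θ'_{n−1} = (2n+1)θ_n².) -/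
open Polynomial

/-- Adler–Moser case `Λ = 1`: any two polynomial solutions `q` of `{p,q}_1 = 0`
for fixed squarefree `p` have Wronskian proportional to `p²`. -/
theorem wronskian_eq_const_mul_p_sq
    (p q₁ q₂ : ℂ[X]) (hp : p ≠ 0) (hsp : Squarefree p)
    (h1 : derivative (derivative p) * q₁ - 2 * derivative p * derivative q₁
        + p * derivative (derivative q₁) = 0)
    (h2 : derivative (derivative p) * q₂ - 2 * derivative p * derivative q₂
        + p * derivative (derivative q₂) = 0) :
    ∃ c : ℂ, derivative q₁ * q₂ - q₁ * derivative q₂ = C c * p ^ 2 := by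
  set W : ℂ[X] := derivative q₁ * q₂ - q₁ * derivative q₂ with hW
  have hcop : IsCoprime p (derivative p) :=
    (PerfectField.separable_iff_squarefree.mpr hsp)
  have key : p * derivative W = 2 * derivative p * W := by
    simp only [hW, derivative_sub, derivative_mul]
    linear_combination q₂ * h1 - q₁ * h2
  have hu : (C (2⁻¹:ℂ)) * 2 = 1 := by
    rw [show (2:ℂ[X]) = C 2 from (map_ofNat C 2).symm, ← C_mul]
    norm_num
  have hpW : p ∣ W := by
    refine hcop.dvd_of_dvd_mul_right ?_
    exact ⟨C (2⁻¹:ℂ) * derivative W, by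
      linear_combination (-(C (2⁻¹:ℂ)) * key) - (derivative p * W) * hu⟩
  obtain ⟨V, hV⟩ := hpW
  have key2 : p * derivative V = derivative p * V := by
    have h : p * (derivative p * V + p * derivative V) = 2 * derivative p * (p * V) := by
      rw [← derivative_mul, ← hV]; exact key
    have := mul_left_cancel₀ hp (by linear_combination h :
      p * (derivative p * V + p * derivative V) = p * (2 * derivative p * V))
    linear_combination this
  have hpV : p ∣ V := by
    refine hcop.dvd_of_dvd_mul_right ?_
    exact ⟨derivative V, by linear_combination -key2⟩
  obtain ⟨U, hU⟩ := hpV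
  have key3 : derivative U = 0 := by
    have h : p * (derivative p * U + p * derivative U) = derivative p * (p * U) := by
      rw [← derivative_mul, ← hU]; exact key2
    have h2 := mul_left_cancel₀ hp (by linear_combination h :
      p * (derivative p * U + p * derivative U) = p * (derivative p * U))
    have h3 : p * derivative U = 0 := by linear_combination h2
    rcases mul_eq_zero.mp h3 with h | h
    · exact absurd h hp
    · exact h
  have : U.natDegree = 0 := natDegree_eq_zero_of_derivative_eq_zero key3
  obtain ⟨c, hc⟩ := natDegree_eq_zero.mp this
  exact ⟨c, by rw [hV, hU, ← hc]; ring⟩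
end

section
/- Let k ∈ ℂ with k ≠ 0, and let p, q ∈ ℂ[X] be nonzero polynomials satisfying {p,q}_2 + 2k·(p'·q − 2·q'·p) = 0. Then deg p = 2·deg q. (Equivalently, the total charge n·1 + m·(−2) must vanish for a system of charges 1 and −2 to be in equilibrium in a nonzero homogeneous field.) -/
/-!
Compare the coefficients of degree `deg p + deg q - 1` in the equation. The second-order part
`p''q - 4p'q' + 4pq''` has degree at most `deg p + deg q - 2`, while the coefficient of
`p'q - 2q'p` there is `(deg p - 2 deg q)` times the product of the leading coefficients;
as `k ≠ 0`, this forces `deg p = 2 deg q`.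
-/

open Polynomial

namespace Polynomial

variable {R : Type*} [Semiring R]

theorem coeff_iterate_derivative_mul_iterate_derivative_eq_zero (p q : R[X]) {i j N : ℕ}
    (h : p.natDegree + q.natDegree < N + i + j) :
    (derivative^[i] p * derivative^[j] q).coeff N = 0 := by
  rw [coeff_mul]
  refine Finset.sum_eq_zero fun x hx => ?_
  rw [Finset.HasAntidiagonal.mem_antidiagonal] at hx
  rw [coeff_iterate_derivative, coeff_iterate_derivative]
  rcases lt_or_ge p.natDegree (x.1 + i) with hp | hp
  · rw [coeff_eq_zero_of_natDegree_lt hp, smul_zero, zero_mul]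
  · rw [coeff_eq_zero_of_natDegree_lt (by omega : q.natDegree < x.2 + j), smul_zero, mul_zero]

theorem coeff_derivative_mul_of_add_one_eq (p q : R[X]) {N : ℕ}
    (hN : N + 1 = p.natDegree + q.natDegree) :
    (derivative p * q).coeff N = p.natDegree * p.leadingCoeff * q.leadingCoeff := by
  cases hn : p.natDegree with
  | zero => simp [derivative_of_natDegree_zero hn]
  | succ n =>
    have hdeg : (derivative p).natDegree ≤ n := by
      have := natDegree_derivative_le p
      omega
    rw [show N = n + q.natDegree by omega, coeff_mul_add_eq_of_natDegree_le hdeg le_rfl,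
      coeff_derivative, leadingCoeff, leadingCoeff, hn, Nat.cast_comm, Nat.cast_succ]

end Polynomial

/-- The total charge must vanish in a nonzero homogeneous field: if
`{p,q}_2 + 2k(p'q − 2q'p) = 0` with `k ≠ 0` then `deg p = 2·deg q`. -/
theorem degree_eq_two_mul_degree_of_field
    (k : ℂ) (hk : k ≠ 0) (p q : ℂ[X]) (hp : p ≠ 0) (hq : q ≠ 0)
    (heq : derivative (derivative p) * q - 4 * derivative p * derivative q
        + 4 * p * derivative (derivative q)
        + 2 * C k * (derivative p * q - 2 * derivative q * p) = 0) :
    p.natDegree = 2 * q.natDegree := by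
  rcases Nat.eq_zero_or_pos (p.natDegree + q.natDegree) with h0 | hpos
  · omega
  obtain ⟨N, hN⟩ : ∃ N, N + 1 = p.natDegree + q.natDegree := ⟨_, Nat.sub_add_cancel hpos⟩
  have second_order {i j : ℕ} (hij : i + j = 2) :
      (derivative^[i] p * derivative^[j] q).coeff N = 0 :=
    coeff_iterate_derivative_mul_iterate_derivative_eq_zero p q (by omega)
  have hp''q : (derivative (derivative p) * q).coeff N = 0 := second_order (i := 2) (j := 0) rfl
  have hp'q' : (derivative p * derivative q).coeff N = 0 := second_order (i := 1) (j := 1) rfl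
  have hpq'' : (p * derivative (derivative q)).coeff N = 0 := second_order (i := 0) (j := 2) rfl
  have hp'q := coeff_derivative_mul_of_add_one_eq p q hN
  have hq'p := coeff_derivative_mul_of_add_one_eq q p (hN.trans (add_comm _ _))
  have hlead : 2 * k * ((p.natDegree : ℂ) - 2 * q.natDegree)
      * (p.leadingCoeff * q.leadingCoeff) = 0 := by
    have := congrArg (coeff · N) heq
    simp only [coeff_add, coeff_sub, mul_assoc, coeff_ofNat_mul, coeff_C_mul, coeff_zero,
      hp''q, hp'q', hpq'', hp'q, hq'p] at this
    linear_combination this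
  have hcast : (p.natDegree : ℂ) = 2 * q.natDegree := by
    simpa [hk, hp, hq, sub_eq_zero] using hlead
  exact_mod_cast hcast
end

section
/- Let N ≥ 1, let Q_1,…,Q_N ∈ ℂ, and let z_1,…,z_N : ℝ → ℂ be twice differentiable functions that are pairwise distinct at every time t. Suppose that for every i and every t, z_i'(t) = ∑_{j≠i} Q_j/(z_i(t) − z_j(t)). Then for every i and every t, z_i''(t) = −∑_{j≠i} Q_j·(Q_i + Q_j)/(z_i(t) − z_j(t))³. (The first-order charge dynamics is thus embedded in a second-order Hamiltonian flow with pairwise inverse-square interactions; the three-body terms arising on differentiation cancel identically.) -/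
/-!
Differentiating the flow gives `z_i'' = -∑_{j≠i} Q_j (z_i' - z_j') / (z_i - z_j)²`. Substituting
the flow once more, `z_i' - z_j'` is `(Q_i + Q_j) / (z_i - z_j)` plus the three-body terms
`Q_k (1/(z_i - z_k) - 1/(z_j - z_k))`, `k ≠ i, j`. These contribute
`∑_{j ≠ k} Q_j Q_k / ((z_i - z_j)(z_i - z_k)(z_j - z_k))` to `z_i''`, a sum whose summand is
antisymmetric in `(j, k)`, so it vanishes.
-/

open Finset

theorem Finset.sum_sum_erase_eq_zero_of_antisymm {α M : Type*} [DecidableEq α] [AddCommMonoid M]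
    (s : Finset α) (T : α → α → M) (hT : ∀ j ∈ s, ∀ k ∈ s, j ≠ k → T j k + T k j = 0) :
    ∑ j ∈ s, ∑ k ∈ s.erase j, T j k = 0 := by
  rw [sum_sigma']
  refine sum_involution (fun p _ => ⟨p.2, p.1⟩) ?_ ?_ ?_ ?_
  all_goals
    rintro ⟨j, k⟩ hjk
    simp only [mem_sigma, mem_erase] at hjk
  · exact hT j hjk.1 k hjk.2.2 hjk.2.1.symm
  · intro _ h
    exact hjk.2.1 (Sigma.mk.inj h).1
  · simp only [mem_sigma, mem_erase]
    exact ⟨hjk.2.2, hjk.2.1.symm, hjk.1⟩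
  · rfl

section Velocity

variable {ι K : Type*} [Fintype ι] [DecidableEq ι] [Field K]

def chargeVelocity (Q x : ι → K) (i : ι) : K :=
  ∑ j ∈ univ.erase i, Q j / (x i - x j)

variable {Q x : ι → K}

theorem chargeVelocity_sub_chargeVelocity (hx : Function.Injective x) {i j : ι} (hij : i ≠ j) :
    chargeVelocity Q x i - chargeVelocity Q x j =
      (Q i + Q j) / (x i - x j) -
        (x i - x j) * ∑ k ∈ (univ.erase i).erase j, Q k / ((x i - x k) * (x j - x k)) := by
  have hji : j ∈ univ.erase i := mem_erase.mpr ⟨hij.symm, mem_univ j⟩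
  have hij' : i ∈ univ.erase j := mem_erase.mpr ⟨hij, mem_univ i⟩
  have herase : (univ.erase j).erase i = (univ.erase i).erase j := erase_right_comm
  unfold chargeVelocity
  rw [← add_sum_erase _ _ hji, ← add_sum_erase _ _ hij', herase, mul_sum]
  have hk : ∀ k ∈ (univ.erase i).erase j, Q k / (x i - x k) - Q k / (x j - x k) =
      -((x i - x j) * (Q k / ((x i - x k) * (x j - x k)))) := by
    intro k hk
    obtain ⟨hkj, hki, -⟩ := by simpa only [mem_erase] using hk
    have hik : x i - x k ≠ 0 := sub_ne_zero.mpr (hx.ne (Ne.symm hki))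
    have hjk : x j - x k ≠ 0 := sub_ne_zero.mpr (hx.ne (Ne.symm hkj))
    field_simp
    ring
  have hsplit := sum_congr rfl hk
  rw [sum_sub_distrib, sum_neg_distrib] at hsplit
  have hpair : Q j / (x i - x j) - Q i / (x j - x i) = (Q i + Q j) / (x i - x j) := by
    rw [← neg_sub (x i), div_neg, sub_neg_eq_add, ← add_div, add_comm]
  linear_combination hpair + hsplit

theorem sum_mul_chargeVelocity_sub_div_sq (hx : Function.Injective x) (i : ι) :
    ∑ j ∈ univ.erase i, Q j * (chargeVelocity Q x i - chargeVelocity Q x j) / (x i - x j) ^ 2 =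
      ∑ j ∈ univ.erase i, Q j * (Q i + Q j) / (x i - x j) ^ 3 := by
  have hne : ∀ {a b}, a ≠ b → x a - x b ≠ 0 := fun h => sub_ne_zero.mpr (hx.ne h)
  set T : ι → ι → K := fun j k => Q j / (x i - x j) * (Q k / ((x i - x k) * (x j - x k)))
  have hterm : ∀ j ∈ univ.erase i,
      Q j * (chargeVelocity Q x i - chargeVelocity Q x j) / (x i - x j) ^ 2 =
        Q j * (Q i + Q j) / (x i - x j) ^ 3 - ∑ k ∈ (univ.erase i).erase j, T j k := by
    intro j hj
    have hij : i ≠ j := (ne_of_mem_erase hj).symm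
    have hd := hne hij
    simp only [T]
    rw [chargeVelocity_sub_chargeVelocity hx hij, ← mul_sum]
    generalize ∑ k ∈ (univ.erase i).erase j, Q k / ((x i - x k) * (x j - x k)) = R
    field_simp
  have hT : ∀ j ∈ univ.erase i, ∀ k ∈ univ.erase i, j ≠ k → T j k + T k j = 0 := by
    intro j hj k hk hjk
    have hij := hne (ne_of_mem_erase hj).symm
    have hik := hne (ne_of_mem_erase hk).symm
    have hjk' := hne hjk
    have hkj := hne hjk.symm
    simp only [T]
    field_simp
    ring
  rw [sum_congr rfl hterm, sum_sub_distrib, sum_sum_erase_eq_zero_of_antisymm _ T hT, sub_zero]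

end Velocity

theorem HasDerivAt.sum_const_div {ι 𝕜 𝕜' : Type*} [NontriviallyNormedField 𝕜]
    [NontriviallyNormedField 𝕜'] [NormedAlgebra 𝕜 𝕜'] {s : Finset ι} (Q : ι → 𝕜')
    {f : ι → 𝕜 → 𝕜'} {f' : ι → 𝕜'} {t : 𝕜} (hf : ∀ j ∈ s, HasDerivAt (f j) (f' j) t)
    (hne : ∀ j ∈ s, f j t ≠ 0) :
    HasDerivAt (fun u => ∑ j ∈ s, Q j / f j u) (-∑ j ∈ s, Q j * f' j / f j t ^ 2) t := by
  rw [← sum_neg_distrib]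
  refine HasDerivAt.fun_sum fun j hj => ?_
  simp only [div_eq_mul_inv (Q j)]
  exact (((hf j hj).fun_inv (hne j hj)).const_mul (Q j)).congr_deriv (by ring)

theorem charge_dynamics_hamiltonian_embedding_general
    (N : ℕ) (Q : Fin N → ℂ) (z zd zdd : Fin N → ℝ → ℂ)
    (hderiv : ∀ i t, HasDerivAt (z i) (zd i t) t)
    (hderiv' : ∀ i t, HasDerivAt (zd i) (zdd i t) t)
    (hdist : ∀ t, ∀ i j : Fin N, i ≠ j → z i t ≠ z j t)
    (hflow : ∀ (i : Fin N) (t : ℝ),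
      zd i t = ∑ j ∈ Finset.univ.erase i, Q j / (z i t - z j t)) :
    ∀ (i : Fin N) (t : ℝ),
      zdd i t = -∑ j ∈ Finset.univ.erase i,
        Q j * (Q i + Q j) / (z i t - z j t) ^ 3 := by
  intro i t
  have hinj : Function.Injective fun k => z k t := fun a b => not_imp_not.mp (hdist t a b)
  have hacc : HasDerivAt (zd i)
      (-∑ j ∈ univ.erase i, Q j * (zd i t - zd j t) / (z i t - z j t) ^ 2) t := by
    refine (HasDerivAt.sum_const_div Q (fun j _ => (hderiv i t).sub (hderiv j t))
      fun j hj => sub_ne_zero.mpr (hinj.ne (ne_of_mem_erase hj).symm)).congr_of_eventuallyEq ?_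
    exact Filter.Eventually.of_forall (hflow i)
  have hvel : ∀ j, zd j t = chargeVelocity Q (fun k => z k t) j := fun j => hflow j t
  rw [(hderiv' i t).unique hacc, ← sum_mul_chargeVelocity_sub_div_sq hinj i]
  simp only [hvel]

/-- The first-order charge dynamics `z_i' = ∑_{j≠i} Q_j/(z_i − z_j)` is embedded in the
second-order Hamiltonian flow `z_i'' = −∑_{j≠i} Q_j(Q_i + Q_j)/(z_i − z_j)³`. -/
theorem charge_dynamics_hamiltonian_embedding
    (N : ℕ) (hN : 1 ≤ N) (Q : Fin N → ℂ) (z zd zdd : Fin N → ℝ → ℂ)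
    (hderiv : ∀ i t, HasDerivAt (z i) (zd i t) t)
    (hderiv' : ∀ i t, HasDerivAt (zd i) (zdd i t) t)
    (hdist : ∀ t, ∀ i j : Fin N, i ≠ j → z i t ≠ z j t)
    (hflow : ∀ (i : Fin N) (t : ℝ),
      zd i t = ∑ j ∈ Finset.univ.erase i, Q j / (z i t - z j t)) :
    ∀ (i : Fin N) (t : ℝ),
      zdd i t = -∑ j ∈ Finset.univ.erase i,
        Q j * (Q i + Q j) / (z i t - z j t) ^ 3 :=
  charge_dynamics_hamiltonian_embedding_general N Q z zd zdd hderiv hderiv' hdist hflow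
end

section
/- Let p, q ∈ ℂ[X] be nonzero polynomials satisfying p''·q − 2·p'·q' + p·q'' = 0 (the Adler–Moser equation {p,q}_1 = 0). Then (deg p − deg q)² = deg p + deg q; consequently there exists d ∈ ℕ such that the degrees of p and q are, in some order, the consecutive triangular numbers d(d+1)/2 and d(d−1)/2. -/
open Polynomial

lemma am_deriv_natDegree (f : ℂ[X]) (j : ℕ) (h : f.natDegree = j + 1) :
    (derivative f).natDegree = j := by
  have hd := degree_derivative_eq f (by omega)
  rw [h] at hd
  simp only [Nat.add_sub_cancel] at hd
  exact natDegree_eq_of_degree_eq_some hd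

lemma am_deriv_coeff (f : ℂ[X]) (j : ℕ) :
    (derivative f).coeff j = ((j : ℂ) + 1) * f.coeff (j + 1) := by
  rw [coeff_derivative]; ring

/-- Degrees of solutions of the Adler–Moser equation `{p,q}_1 = 0` are consecutive
triangular numbers. -/
theorem adler_moser_degrees
    (p q : ℂ[X]) (hp : p ≠ 0) (hq : q ≠ 0)
    (heq : derivative (derivative p) * q - 2 * derivative p * derivative q
        + p * derivative (derivative q) = 0) :
    ((p.natDegree : ℤ) - q.natDegree) ^ 2 = p.natDegree + q.natDegree ∧
      ∃ d : ℕ, (2 * p.natDegree = d * (d + 1) ∧ 2 * q.natDegree = d * (d - 1)) ∨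
        (2 * q.natDegree = d * (d + 1) ∧ 2 * p.natDegree = d * (d - 1)) := by
  set m := p.natDegree with hm
  set n := q.natDegree with hn
  have ha : p.leadingCoeff ≠ 0 := leadingCoeff_ne_zero.mpr hp
  have hb : q.leadingCoeff ≠ 0 := leadingCoeff_ne_zero.mpr hq
  set a := p.leadingCoeff with haa
  set b := q.leadingCoeff with hbb
  have key : ((m : ℤ) - n) ^ 2 = m + n := by
    rcases le_or_gt (m + n) 1 with hmn | hmn
    · -- tiny degrees: check directly
      have : (m = 0 ∧ n = 0) ∨ (m = 1 ∧ n = 0) ∨ (m = 0 ∧ n = 1) := by omega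
      rcases this with ⟨h1, h2⟩ | ⟨h1, h2⟩ | ⟨h1, h2⟩ <;> rw [h1, h2] <;> norm_num
    · set k := m + n - 2 with hk
      have hc : (derivative (derivative p) * q).coeff k
          - 2 * ((derivative p * derivative q).coeff k)
          + (p * derivative (derivative q)).coeff k = 0 := by
        have h0 := congrArg (fun f : ℂ[X] => f.coeff k) heq
        have h2 : (2 : ℂ[X]) * derivative p * derivative q
            = Polynomial.C 2 * (derivative p * derivative q) := by
          rw [mul_assoc]; congr 1
        rw [h2] at h0
        simpa [coeff_sub, coeff_add, coeff_C_mul] using h0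
      have C1 : (derivative (derivative p) * q).coeff k
          = (m : ℂ) * ((m : ℂ) - 1) * (a * b) := by
        rcases le_or_gt m 1 with h1 | h1
        · have hz : derivative (derivative p) = 0 := by
            apply derivative_of_natDegree_zero
            have := natDegree_derivative_le p
            omega
          rw [hz, zero_mul, coeff_zero]
          interval_cases m <;> norm_num
        · obtain ⟨j, hj⟩ : ∃ j, m = j + 2 := ⟨m - 2, by omega⟩
          have hd1 : (derivative p).natDegree = j + 1 :=
            am_deriv_natDegree p (j + 1) (by omega)
          have hd2 : (derivative (derivative p)).natDegree = j :=
            am_deriv_natDegree (derivative p) j hd1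
          have hkk : k = j + n := by omega
          rw [hkk, ← hd2, hn, coeff_mul_degree_add_degree]
          have e1 : (derivative (derivative p)).leadingCoeff
              = (m : ℂ) * ((m : ℂ) - 1) * a := by
            rw [leadingCoeff, hd2, am_deriv_coeff, am_deriv_coeff]
            have : p.coeff (j + 1 + 1) = a := by
              rw [haa, leadingCoeff]; congr 1; omega
            rw [this, hj]; push_cast; ring
          rw [e1]; ring
      have C3 : (p * derivative (derivative q)).coeff k
          = (n : ℂ) * ((n : ℂ) - 1) * (a * b) := by
        rcases le_or_gt n 1 with h1 | h1
        · have hz : derivative (derivative q) = 0 := by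
            apply derivative_of_natDegree_zero
            have := natDegree_derivative_le q
            omega
          rw [hz, mul_zero, coeff_zero]
          interval_cases n <;> norm_num
        · obtain ⟨j, hj⟩ : ∃ j, n = j + 2 := ⟨n - 2, by omega⟩
          have hd1 : (derivative q).natDegree = j + 1 :=
            am_deriv_natDegree q (j + 1) (by omega)
          have hd2 : (derivative (derivative q)).natDegree = j :=
            am_deriv_natDegree (derivative q) j hd1
          have hkk : k = m + j := by omega
          rw [hkk, ← hd2, hm, coeff_mul_degree_add_degree]
          have e1 : (derivative (derivative q)).leadingCoeff
              = (n : ℂ) * ((n : ℂ) - 1) * b := by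
            rw [leadingCoeff, hd2, am_deriv_coeff, am_deriv_coeff]
            have : q.coeff (j + 1 + 1) = b := by
              rw [hbb, leadingCoeff]; congr 1; omega
            rw [this, hj]; push_cast; ring
          rw [e1]; ring
      have C2 : (derivative p * derivative q).coeff k = (m : ℂ) * n * (a * b) := by
        rcases Nat.eq_zero_or_pos m with h1 | h1
        · have hz : derivative p = 0 := derivative_of_natDegree_zero h1
          rw [hz, zero_mul, coeff_zero, h1]; norm_num
        rcases Nat.eq_zero_or_pos n with h2 | h2
        · have hz : derivative q = 0 := derivative_of_natDegree_zero h2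
          rw [hz, mul_zero, coeff_zero, h2]; norm_num
        obtain ⟨i, hi⟩ : ∃ i, m = i + 1 := ⟨m - 1, by omega⟩
        obtain ⟨j, hj⟩ : ∃ j, n = j + 1 := ⟨n - 1, by omega⟩
        have hd1 : (derivative p).natDegree = i := am_deriv_natDegree p i hi
        have hd2 : (derivative q).natDegree = j := am_deriv_natDegree q j hj
        have hkk : k = i + j := by omega
        rw [hkk, ← hd1, ← hd2, coeff_mul_degree_add_degree]
        have e1 : (derivative p).leadingCoeff = (m : ℂ) * a := by
          rw [leadingCoeff, hd1, am_deriv_coeff]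
          have : p.coeff (i + 1) = a := by rw [haa, leadingCoeff]; congr 1; omega
          rw [this, hi]; push_cast; ring
        have e2 : (derivative q).leadingCoeff = (n : ℂ) * b := by
          rw [leadingCoeff, hd2, am_deriv_coeff]
          have : q.coeff (j + 1) = b := by rw [hbb, leadingCoeff]; congr 1; omega
          rw [this, hj]; push_cast; ring
        rw [e1, e2]; ring
      rw [C1, C2, C3] at hc
      have hab : a * b ≠ 0 := mul_ne_zero ha hb
      have hC : ((m : ℂ) - n) ^ 2 = (m : ℂ) + n := by
        have h' : ((m : ℂ) * ((m : ℂ) - 1) - 2 * ((m : ℂ) * n) + (n : ℂ) * ((n : ℂ) - 1))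
            * (a * b) = 0 := by linear_combination hc
        have h'' := (mul_eq_zero.mp h').resolve_right hab
        linear_combination h''
      have hC' : (((m : ℤ) - n : ℤ) : ℂ) ^ 2 = (((m : ℤ) + n : ℤ) : ℂ) := by
        push_cast; exact hC
      exact_mod_cast hC'
  refine ⟨key, ?_⟩
  obtain ⟨d, h1⟩ : ∃ d : ℕ, ((m : ℤ) - n = d ∨ (m : ℤ) - n = -(d : ℤ)) :=
    ⟨_, Int.natAbs_eq _⟩
  refine ⟨d, ?_⟩
  have h2 : (d : ℤ) * d = m + n := by
    rcases h1 with h | h <;> rw [← key, h] <;> ring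
  rcases d with _ | e
  · have h2' : m = 0 ∧ n = 0 := by constructor <;> omega
    left; rw [h2'.1, h2'.2]; omega
  · have h2' : (e + 1) * (e + 1) = m + n := by exact_mod_cast h2
    have h3 : (e + 1) * ((e + 1) + 1) = (e + 1) * (e + 1) + (e + 1) := by ring
    have h4 : (e + 1) * ((e + 1) - 1) + (e + 1) = (e + 1) * (e + 1) := by
      simp only [Nat.add_sub_cancel]; ring
    omega
end
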